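/- arXiv:1907.01507 — 8 statements merged into one kernel-verified Lean document; each statement's English description precedes it below -/
import Mathlib

section
/- Let ψ₂ : (ℝ^{2×2} × ℝ² × ℝ^{2×2} × ℝ²) → ℝ^{6×2} be the weight map of the two-layer ReLU network ν_θ(s) = A₂ σ_max(A₁ s + b₁) + b₂ for the design matrix S ∈ ℝ^{6×2} with rows s₁ = (−2,0), s₂ = (−1,0), s₃ = (0,0), s₄ = (1,0), s₅ = (2,0), s₆ = (1,1), i.e. ψ₂(A₁,b₁,A₂,b₂) is the 6×2 matrix whose i-th row is ν_θ(sᵢ)ᵀ. Then the matrix T ∈ ℝ^{6×2} with rows t₁ = (2,0), t₂ = (1,0), t₃ = (0,0), t₄ = (−2,0), t₅ = (−4,0), t₆ = (0,1) lies in the topological closure of the image ψ₂(Θ) = {ψ₂(θ) : θ ∈ Θ}. -/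
/-- ReLU activation. -/
noncomputable def relu (x : ℝ) : ℝ := max x 0

/-- The design matrix `S ∈ ℝ^{6×2}`. -/
noncomputable def S : Matrix (Fin 6) (Fin 2) ℝ :=
  !![-2, 0; -1, 0; 0, 0; 1, 0; 2, 0; 1, 1]

/-- The response matrix `T ∈ ℝ^{6×2}`. -/
noncomputable def T : Matrix (Fin 6) (Fin 2) ℝ :=
  !![2, 0; 1, 0; 0, 0; -2, 0; -4, 0; 0, 1]

/-- The two-layer ReLU network `ν_θ(s) = A₂ σ_max(A₁ s + b₁) + b₂`. -/
noncomputable def nu (A₁ : Matrix (Fin 2) (Fin 2) ℝ) (b₁ : Fin 2 → ℝ)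
    (A₂ : Matrix (Fin 2) (Fin 2) ℝ) (b₂ : Fin 2 → ℝ) (s : Fin 2 → ℝ) : Fin 2 → ℝ :=
  A₂.mulVec (fun j => relu (A₁.mulVec s j + b₁ j)) + b₂

/-- The weight map `ψ₂ : Θ → ℝ^{6×2}`, sending weights to the matrix whose `i`-th row is
`ν_θ(sᵢ)ᵀ`. -/
noncomputable def psi2
    (θ : Matrix (Fin 2) (Fin 2) ℝ × (Fin 2 → ℝ) × Matrix (Fin 2) (Fin 2) ℝ × (Fin 2 → ℝ)) :
    Matrix (Fin 6) (Fin 2) ℝ :=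
  Matrix.of fun i j => nu θ.1 θ.2.1 θ.2.2.1 θ.2.2.2 (fun k => S i k) j

noncomputable def thetaSeq (n : ℕ) :
    Matrix (Fin 2) (Fin 2) ℝ × (Fin 2 → ℝ) × Matrix (Fin 2) (Fin 2) ℝ × (Fin 2 → ℝ) :=
  (!![1, -((n:ℝ)+3)/2; -1, (n:ℝ)+2], ![(n:ℝ)+2, 0],
   !![-2, -1; 0, 1/((n:ℝ)+1)], ![2*((n:ℝ)+2), 0])

noncomputable def Err : Matrix (Fin 6) (Fin 2) ℝ :=
  !![0, 2; 0, 1; 0, 0; 0, 0; 0, 0; 0, 0]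

set_option maxHeartbeats 1000000 in
lemma key (n : ℕ) :
    psi2 (thetaSeq n) = Matrix.of fun i j => T i j + Err i j / ((n:ℝ)+1) := by
  have hn : (0:ℝ) ≤ (n:ℝ) := Nat.cast_nonneg n
  funext i j
  fin_cases i <;> fin_cases j <;>
  · simp only [psi2, nu, thetaSeq, relu, Matrix.mulVec, dotProduct, S, T, Err,
      Fin.sum_univ_two, Pi.add_apply, Matrix.of_apply,
      show ((⟨5, by norm_num⟩ : Fin 6)) = Fin.succ 4 from rfl,
      show ((⟨4, by norm_num⟩ : Fin 6)) = Fin.succ 3 from rfl,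
      show ((⟨3, by norm_num⟩ : Fin 6)) = Fin.succ 2 from rfl,
      show ((⟨2, by norm_num⟩ : Fin 6)) = Fin.succ 1 from rfl,
      show ((⟨1, by norm_num⟩ : Fin 6)) = Fin.succ 0 from rfl,
      show ((4:Fin 5)) = Fin.succ 3 from rfl, show ((3:Fin 5)) = Fin.succ 2 from rfl,
      show ((2:Fin 5)) = Fin.succ 1 from rfl, show ((2:Fin 4)) = Fin.succ 1 from rfl, show ((3:Fin 4)) = Fin.succ 2 from rfl,
      show ((2:Fin 3)) = Fin.succ 1 from rfl, show ((1:Fin 2)) = Fin.succ 0 from rfl,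
      show ((⟨1, by norm_num⟩ : Fin 2)) = Fin.succ 0 from rfl,
      show ((⟨0, by norm_num⟩ : Fin 2)) = 0 from rfl,
      show ((⟨0, by norm_num⟩ : Fin 6)) = 0 from rfl,
      Matrix.cons_val_succ, Matrix.cons_val_zero, Matrix.cons_val_one, Matrix.head_cons]
    norm_num [Matrix.vecHead, Matrix.vecTail, Function.comp]
    all_goals repeat rw [max_eq_left (by linarith)]
    all_goals have h1 : ((n:ℝ)+1) ≠ 0 := by positivity
    all_goals try field_simp
    all_goals try ring

/-- `T` lies in the topological closure of the image of weights `ψ₂(Θ)`. -/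
theorem T_mem_closure_image_of_weights : T ∈ closure (Set.range psi2) := by
  have htend : Filter.Tendsto (fun n : ℕ => psi2 (thetaSeq n)) Filter.atTop (nhds T) := by
    have h1 : Filter.Tendsto (fun n : ℕ => (1:ℝ) / ((n:ℝ) + 1)) Filter.atTop (nhds 0) :=
      tendsto_one_div_add_atTop_nhds_zero_nat
    apply tendsto_pi_nhds.2
    intro i
    apply tendsto_pi_nhds.2
    intro j
    simp only [key, Matrix.of_apply]
    have h2 : Filter.Tendsto (fun n : ℕ => T i j + Err i j * (1 / ((n:ℝ) + 1)))
        Filter.atTop (nhds (T i j + Err i j * 0)) :=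
      Filter.Tendsto.const_add _ (Filter.Tendsto.const_mul _ h1)
    simpa [div_eq_mul_inv, mul_comm] using h2
  exact mem_closure_of_tendsto htend (Filter.Eventually.of_forall fun n => ⟨thetaSeq n, rfl⟩)
end

section
/- Let ψ₂ : (ℝ^{2×2} × ℝ² × ℝ^{2×2} × ℝ²) → ℝ^{6×2} be the weight map of the two-layer ReLU network ν_θ(s) = A₂ σ_max(A₁ s + b₁) + b₂ for the design matrix S ∈ ℝ^{6×2} with rows s₁ = (−2,0), s₂ = (−1,0), s₃ = (0,0), s₄ = (1,0), s₅ = (2,0), s₆ = (1,1). Then the matrix T ∈ ℝ^{6×2} with rows t₁ = (2,0), t₂ = (1,0), t₃ = (0,0), t₄ = (−2,0), t₅ = (−4,0), t₆ = (0,1) is NOT in the image ψ₂(Θ): there exist no weights θ = (A₁,b₁,A₂,b₂) with ψ₂(θ) = T. -/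
lemma unit_zero (a b δ : ℝ)
    (h2 : relu b - relu (-a + b) = δ)
    (h3 : relu (a + b) - relu b = 2 * δ)
    (h4 : relu (a * 2 + b) - relu (a + b) = 2 * δ)
    (h1 : relu (-a + b) - relu (-(a * 2) + b) = δ) : δ = 0 := by
  simp only [relu] at h1 h2 h3 h4
  rcases max_cases (-(a*2)+b) 0 with ⟨q1,l1⟩|⟨q1,l1⟩ <;>
  rcases max_cases (-a+b) 0 with ⟨q2,l2⟩|⟨q2,l2⟩ <;>
  rcases max_cases b 0 with ⟨q3,l3⟩|⟨q3,l3⟩ <;>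
  rcases max_cases (a+b) 0 with ⟨q4,l4⟩|⟨q4,l4⟩ <;>
  rcases max_cases (a*2+b) 0 with ⟨q5,l5⟩|⟨q5,l5⟩ <;>
  linarith [q1, q2, q3, q4, q5]

/-- `T` lies in the topological closure of the image of weights `ψ₂(Θ)`. -/
theorem T_not_mem_image_of_weights : T ∉ Set.range psi2 := by
  rintro ⟨⟨A₁, b₁, A₂, b₂⟩, h⟩
  have H : ∀ i j, nu A₁ b₁ A₂ b₂ (fun k => S i k) j = T i j := by
    intro i j
    exact congrFun (congrFun h i) j
  have hS5 : (fun k => S 5 k) = ![(1:ℝ), 1] := by funext k; fin_cases k <;> rfl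
  have e1 := H 0 0
  have e2 := H 1 0
  have e3 := H 2 0
  have e4 := H 3 0
  have e5 := H 4 0
  have f1 := H 0 1
  have f2 := H 1 1
  have f3 := H 2 1
  have f4 := H 3 1
  have f5 := H 4 1
  have f6 := H 5 1
  rw [hS5, show T 5 1 = (1:ℝ) from rfl] at f6
  simp [nu, S, T, Matrix.mulVec, dotProduct, Fin.sum_univ_two] at e1 e2 e3 e4 e5 f1 f2 f3 f4 f5 f6
  have h1 : ((A₂ 0 0) * (A₂ 1 1) - (A₂ 0 1) * (A₂ 1 0)) * ((relu (-A₁ 0 0 + b₁ 0)) - (relu (-(A₁ 0 0 * 2) + b₁ 0))) = -(A₂ 1 1) := by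
    linear_combination (A₂ 1 1)*e2 - (A₂ 1 1)*e1 - (A₂ 0 1)*f2 + (A₂ 0 1)*f1
  have h1' : ((A₂ 0 0) * (A₂ 1 1) - (A₂ 0 1) * (A₂ 1 0)) * ((relu (-A₁ 1 0 + b₁ 1)) - (relu (-(A₁ 1 0 * 2) + b₁ 1))) = (A₂ 1 0) := by
    linear_combination (A₂ 0 0)*f2 - (A₂ 0 0)*f1 - (A₂ 1 0)*e2 + (A₂ 1 0)*e1
  have h2 : ((A₂ 0 0) * (A₂ 1 1) - (A₂ 0 1) * (A₂ 1 0)) * ((relu (b₁ 0)) - (relu (-A₁ 0 0 + b₁ 0))) = -(A₂ 1 1) := by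
    linear_combination (A₂ 1 1)*e3 - (A₂ 1 1)*e2 - (A₂ 0 1)*f3 + (A₂ 0 1)*f2
  have h2' : ((A₂ 0 0) * (A₂ 1 1) - (A₂ 0 1) * (A₂ 1 0)) * ((relu (b₁ 1)) - (relu (-A₁ 1 0 + b₁ 1))) = (A₂ 1 0) := by
    linear_combination (A₂ 0 0)*f3 - (A₂ 0 0)*f2 - (A₂ 1 0)*e3 + (A₂ 1 0)*e2
  have h3 : ((A₂ 0 0) * (A₂ 1 1) - (A₂ 0 1) * (A₂ 1 0)) * ((relu (A₁ 0 0 + b₁ 0)) - (relu (b₁ 0))) = -(2 * (A₂ 1 1)) := by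
    linear_combination (A₂ 1 1)*e4 - (A₂ 1 1)*e3 - (A₂ 0 1)*f4 + (A₂ 0 1)*f3
  have h3' : ((A₂ 0 0) * (A₂ 1 1) - (A₂ 0 1) * (A₂ 1 0)) * ((relu (A₁ 1 0 + b₁ 1)) - (relu (b₁ 1))) = 2 * (A₂ 1 0) := by
    linear_combination (A₂ 0 0)*f4 - (A₂ 0 0)*f3 - (A₂ 1 0)*e4 + (A₂ 1 0)*e3
  have h4 : ((A₂ 0 0) * (A₂ 1 1) - (A₂ 0 1) * (A₂ 1 0)) * ((relu (A₁ 0 0 * 2 + b₁ 0)) - (relu (A₁ 0 0 + b₁ 0))) = -(2 * (A₂ 1 1)) := by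
    linear_combination (A₂ 1 1)*e5 - (A₂ 1 1)*e4 - (A₂ 0 1)*f5 + (A₂ 0 1)*f4
  have h4' : ((A₂ 0 0) * (A₂ 1 1) - (A₂ 0 1) * (A₂ 1 0)) * ((relu (A₁ 1 0 * 2 + b₁ 1)) - (relu (A₁ 1 0 + b₁ 1))) = 2 * (A₂ 1 0) := by
    linear_combination (A₂ 0 0)*f5 - (A₂ 0 0)*f4 - (A₂ 1 0)*e5 + (A₂ 1 0)*e4
  have hDet : ((A₂ 0 0) * (A₂ 1 1) - (A₂ 0 1) * (A₂ 1 0)) ≠ 0 := by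
    intro h0
    have hd1 : (A₂ 1 1) = 0 := by linear_combination h1 - ((relu (-A₁ 0 0 + b₁ 0)) - (relu (-(A₁ 0 0 * 2) + b₁ 0)))*h0
    have hd0 : (A₂ 1 0) = 0 := by linear_combination -h1' + ((relu (-A₁ 1 0 + b₁ 1)) - (relu (-(A₁ 1 0 * 2) + b₁ 1)))*h0
    have hc : (0:ℝ) = 1 := by
      linear_combination f6 - f4 + ((relu (A₁ 0 0 + b₁ 0)) - (relu (A₁ 0 0 + A₁ 0 1 + b₁ 0)))*hd0 + ((relu (A₁ 1 0 + b₁ 1)) - (relu (A₁ 1 0 + A₁ 1 1 + b₁ 1)))*hd1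
    norm_num at hc
  have g1 : (relu (b₁ 0)) - (relu (-A₁ 0 0 + b₁ 0)) = (relu (-A₁ 0 0 + b₁ 0)) - (relu (-(A₁ 0 0 * 2) + b₁ 0)) := mul_left_cancel₀ hDet (by linear_combination h2 - h1)
  have g2 : (relu (A₁ 0 0 + b₁ 0)) - (relu (b₁ 0)) = 2 * ((relu (-A₁ 0 0 + b₁ 0)) - (relu (-(A₁ 0 0 * 2) + b₁ 0))) := mul_left_cancel₀ hDet (by linear_combination h3 - 2*h1)
  have g3 : (relu (A₁ 0 0 * 2 + b₁ 0)) - (relu (A₁ 0 0 + b₁ 0)) = 2 * ((relu (-A₁ 0 0 + b₁ 0)) - (relu (-(A₁ 0 0 * 2) + b₁ 0))) := mul_left_cancel₀ hDet (by linear_combination h4 - 2*h1)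
  have g1' : (relu (b₁ 1)) - (relu (-A₁ 1 0 + b₁ 1)) = (relu (-A₁ 1 0 + b₁ 1)) - (relu (-(A₁ 1 0 * 2) + b₁ 1)) := mul_left_cancel₀ hDet (by linear_combination h2' - h1')
  have g2' : (relu (A₁ 1 0 + b₁ 1)) - (relu (b₁ 1)) = 2 * ((relu (-A₁ 1 0 + b₁ 1)) - (relu (-(A₁ 1 0 * 2) + b₁ 1))) := mul_left_cancel₀ hDet (by linear_combination h3' - 2*h1')
  have g3' : (relu (A₁ 1 0 * 2 + b₁ 1)) - (relu (A₁ 1 0 + b₁ 1)) = 2 * ((relu (-A₁ 1 0 + b₁ 1)) - (relu (-(A₁ 1 0 * 2) + b₁ 1))) := mul_left_cancel₀ hDet (by linear_combination h4' - 2*h1')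
  have z0 : (relu (-A₁ 0 0 + b₁ 0)) - (relu (-(A₁ 0 0 * 2) + b₁ 0)) = 0 := unit_zero (A₁ 0 0) (b₁ 0) _ g1 g2 g3 rfl
  have z1 : (relu (-A₁ 1 0 + b₁ 1)) - (relu (-(A₁ 1 0 * 2) + b₁ 1)) = 0 := unit_zero (A₁ 1 0) (b₁ 1) _ g1' g2' g3' rfl
  have hc : (0:ℝ) = 1 := by linear_combination e1 - e2 + (A₂ 0 0)*z0 + (A₂ 0 1)*z1
  norm_num at hc
end

section
/- Let ψ₂ : (ℝ^{2×2} × ℝ² × ℝ^{2×2} × ℝ²) → ℝ^{6×2} be the weight map of the two-layer ReLU network for the design matrix S ∈ ℝ^{6×2} with rows (−2,0), (−1,0), (0,0), (1,0), (2,0), (1,1), and let T ∈ ℝ^{6×2} have rows (2,0), (1,0), (0,0), (−2,0), (−4,0), (0,1). Then the infimum over all weights θ of ‖T − ψ₂(θ)‖_F equals 0, yet ‖T − ψ₂(θ)‖_F > 0 for every θ; i.e. the best two-layer ReLU neural network approximation problem inf_θ ‖T − ψ₂(θ)‖_F does not attain its infimum. -/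
/-- The Frobenius norm on `ℝ^{6×2}`. -/
noncomputable def frob (M : Matrix (Fin 6) (Fin 2) ℝ) : ℝ :=
  Real.sqrt (∑ i, ∑ j, (M i j) ^ 2)

/-! ### Auxiliary lemmas -/

lemma max_pos_eq (x : ℝ) (h : 0 < max x 0) : max x 0 = x := by
  rcases le_or_gt x 0 with hx | hx
  · simp [max_eq_right hx] at h
  · exact max_eq_left hx.le

/-- If a single ReLU unit `x ↦ max (a x + e) 0` agrees with `x ↦ α f x + γ`,
where `f` takes values `2, 1, 0, -2, -4` at `x = -2, -1, 0, 1, 2`, then `α = 0`. -/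
lemma key_s2 (a e α γ : ℝ)
    (h1 : max (-(a*2) + e) 0 = 2*α + γ)
    (h2 : max (-a + e) 0 = α + γ)
    (h3 : max e 0 = γ)
    (h4 : max (a + e) 0 = -2*α + γ)
    (h5 : max (a*2 + e) 0 = -4*α + γ) : α = 0 := by
  rcases lt_trichotomy α 0 with hα | hα | hα
  · have hv : (0:ℝ) ≤ 2*α + γ := h1 ▸ le_max_right _ _
    have p1 : 0 < max (-a + e) 0 := by rw [h2]; linarith
    have p2 : 0 < max e 0 := by rw [h3]; linarith
    have p3 : 0 < max (a + e) 0 := by rw [h4]; linarith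
    rw [max_pos_eq _ p1] at h2
    rw [max_pos_eq _ p2] at h3
    rw [max_pos_eq _ p3] at h4
    linarith
  · exact hα
  · have hv : (0:ℝ) ≤ -4*α + γ := h5 ▸ le_max_right _ _
    have p1 : 0 < max (-a + e) 0 := by rw [h2]; linarith
    have p2 : 0 < max e 0 := by rw [h3]; linarith
    have p3 : 0 < max (a + e) 0 := by rw [h4]; linarith
    rw [max_pos_eq _ p1] at h2
    rw [max_pos_eq _ p2] at h3
    rw [max_pos_eq _ p3] at h4
    linarith

/-- Scaled version of `key`. -/
lemma key' (a e D p q : ℝ) (hD : D ≠ 0)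
    (h1 : max (-(a*2) + e) 0 * D = 2*p + q)
    (h2 : max (-a + e) 0 * D = p + q)
    (h3 : max e 0 * D = q)
    (h4 : max (a + e) 0 * D = -2*p + q)
    (h5 : max (a*2 + e) 0 * D = -4*p + q) : p = 0 := by
  have hk := key_s2 a e (p/D) (q/D)
    (by rw [show 2*(p/D) + q/D = (2*p+q)/D by ring, eq_div_iff hD]; linear_combination h1)
    (by rw [show (p/D) + q/D = (p+q)/D by ring, eq_div_iff hD]; linear_combination h2)
    (by rw [show (q/D) = q/D by ring, eq_div_iff hD]; linear_combination h3)
    (by rw [show -2*(p/D) + q/D = (-2*p+q)/D by ring, eq_div_iff hD]; linear_combination h4)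
    (by rw [show -4*(p/D) + q/D = (-4*p+q)/D by ring, eq_div_iff hD]; linear_combination h5)
  rcases div_eq_zero_iff.mp hk with h | h
  · exact h
  · exact absurd h hD

/-- No two-layer ReLU network with two hidden units fits the data exactly. -/
lemma no_exact (a b c d e f g h k l m n : ℝ)
    (E1 : g * max (-(a*2) + e) 0 + h * max (-(c*2) + f) 0 + m = 2)
    (E2 : g * max (-a + e) 0 + h * max (-c + f) 0 + m = 1)
    (E3 : g * max e 0 + h * max f 0 + m = 0)
    (E4 : g * max (a + e) 0 + h * max (c + f) 0 + m = -2)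
    (E5 : g * max (a*2 + e) 0 + h * max (c*2 + f) 0 + m = -4)
    (F1 : k * max (-(a*2) + e) 0 + l * max (-(c*2) + f) 0 + n = 0)
    (F2 : k * max (-a + e) 0 + l * max (-c + f) 0 + n = 0)
    (F3 : k * max e 0 + l * max f 0 + n = 0)
    (F4 : k * max (a + e) 0 + l * max (c + f) 0 + n = 0)
    (F5 : k * max (a*2 + e) 0 + l * max (c*2 + f) 0 + n = 0)
    (F6 : k * max (a + b + e) 0 + l * max (c + d + f) 0 + n = 1) : False := by
  by_cases hD : g*l - h*k = 0
  · by_cases hl : l = 0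
    · by_cases hk : k = 0
      · rw [hk, hl] at F3 F6; linarith
      · have hh : h = 0 := by
          have hhk : h * k = 0 := by rw [hl] at hD; linarith
          exact (mul_eq_zero.mp hhk).resolve_right hk
        subst hh hl
        have G1 : k*m - g*n = 2*k := by linear_combination k*E1 - g*F1
        have G2 : k*m - g*n = k := by linear_combination k*E2 - g*F2
        exact hk (by linarith)
    · have G1 : l*m - h*n = 2*l := by
        linear_combination l*E1 - h*F1 - (max (-(a*2) + e) 0) * hD
      have G2 : l*m - h*n = l := by
        linear_combination l*E2 - h*F2 - (max (-a + e) 0) * hD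
      exact hl (by linarith)
  · have hl0 : l = 0 := key' a e (g*l - h*k) l (h*n - l*m) hD
      (by linear_combination l*E1 - h*F1)
      (by linear_combination l*E2 - h*F2)
      (by linear_combination l*E3 - h*F3)
      (by linear_combination l*E4 - h*F4)
      (by linear_combination l*E5 - h*F5)
    have hk0 : -k = 0 := key' c f (g*l - h*k) (-k) (k*m - g*n) hD
      (by linear_combination g*F1 - k*E1)
      (by linear_combination g*F2 - k*E2)
      (by linear_combination g*F3 - k*E3)
      (by linear_combination g*F4 - k*E4)
      (by linear_combination g*F5 - k*E5)
    have hk1 : k = 0 := by linarith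
    exact hD (by rw [hl0, hk1]; ring)

lemma cons_val_five {α : Type*} (x : α) (u : Fin 5 → α) :
    Matrix.vecCons x u (5 : Fin 6) = u 4 := rfl

/-- Every weight configuration has positive error. -/
lemma frob_pos (θ : Matrix (Fin 2) (Fin 2) ℝ × (Fin 2 → ℝ) × Matrix (Fin 2) (Fin 2) ℝ × (Fin 2 → ℝ)) :
    0 < frob (T - psi2 θ) := by
  obtain ⟨A1, b1, A2, b2⟩ := θ
  rw [frob, Real.sqrt_pos]
  by_contra hc
  push_neg at hc
  have hsum : ∑ i, ∑ j, ((T - psi2 (A1, b1, A2, b2)) i j) ^ 2 = 0 :=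
    le_antisymm hc (by positivity)
  have hz : ∀ i j, (T - psi2 (A1, b1, A2, b2)) i j = 0 := by
    intro i j
    have h1 := (Finset.sum_eq_zero_iff_of_nonneg
      (fun i _ => Finset.sum_nonneg fun j _ => sq_nonneg _)).mp hsum i (Finset.mem_univ i)
    have h2 := (Finset.sum_eq_zero_iff_of_nonneg
      (fun j _ => sq_nonneg _)).mp h1 j (Finset.mem_univ j)
    exact pow_eq_zero_iff two_ne_zero |>.mp h2
  have h1 := hz 0 0; have h2 := hz 1 0; have h3 := hz 2 0; have h4 := hz 3 0; have h5 := hz 4 0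
  have g1 := hz 0 1; have g2 := hz 1 1; have g3 := hz 2 1; have g4 := hz 3 1; have g5 := hz 4 1
  have g6 := hz ((4 : Fin 5).succ) 1
  simp [psi2, nu, S, T, relu, Matrix.mulVec, dotProduct, Fin.sum_univ_two,
    Matrix.cons_val_succ, Matrix.cons_val_four] at h1 h2 h3 h4 h5 g1 g2 g3 g4 g5 g6
  exact no_exact (A1 0 0) (A1 0 1) (A1 1 0) (A1 1 1) (b1 0) (b1 1)
    (A2 0 0) (A2 0 1) (A2 1 0) (A2 1 1) (b2 0) (b2 1)
    (by linarith) (by linarith) (by linarith) (by linarith) (by linarith)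
    (by linarith) (by linarith) (by linarith) (by linarith) (by linarith) (by linarith)

/-- The error of the explicit near-minimizing family. -/
lemma frob_approx (c : ℝ) (hc : 0 < c) :
    frob (T - psi2 (!![-1, 1+c; 1, (c-2)/2], (fun _ => 0), !![1, -2; 1/c, 0], (fun _ => 0)))
      = Real.sqrt (5/c^2) := by
  rw [frob]
  congr 1
  simp [psi2, nu, S, T, relu, Matrix.mulVec, dotProduct, Fin.sum_univ_two,
    Fin.sum_univ_six, Matrix.cons_val_succ, Matrix.cons_val_four, cons_val_five]
  rw [show ((1:ℝ) + (c - 2) / 2) ⊔ 0 = 1 + (c - 2) / 2 from max_eq_left (by linarith),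
    show c ⊔ 0 = c from max_eq_left hc.le]
  field_simp
  ring

/-- The best two-layer ReLU neural network approximation problem
`inf_θ ‖T − ψ₂(θ)‖_F` for this `S` and `T` has infimum `0`, yet
`‖T − ψ₂(θ)‖_F > 0` for every `θ`: the infimum is not attained. -/
theorem erm_infimum_not_attained :
    (⨅ θ : Matrix (Fin 2) (Fin 2) ℝ × (Fin 2 → ℝ) × Matrix (Fin 2) (Fin 2) ℝ × (Fin 2 → ℝ),
      frob (T - psi2 θ)) = 0 ∧
    ∀ θ : Matrix (Fin 2) (Fin 2) ℝ × (Fin 2 → ℝ) × Matrix (Fin 2) (Fin 2) ℝ × (Fin 2 → ℝ),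
      0 < frob (T - psi2 θ) := by
  refine ⟨?_, frob_pos⟩
  have hbdd : BddBelow (Set.range fun θ :
      Matrix (Fin 2) (Fin 2) ℝ × (Fin 2 → ℝ) × Matrix (Fin 2) (Fin 2) ℝ × (Fin 2 → ℝ) =>
      frob (T - psi2 θ)) := by
    refine ⟨0, ?_⟩
    rintro x ⟨θ, rfl⟩
    exact Real.sqrt_nonneg _
  refine le_antisymm ?_ (le_ciInf fun θ => Real.sqrt_nonneg _)
  refine le_of_forall_pos_le_add fun ε hε => ?_
  rw [zero_add]
  have hc : (0:ℝ) < 3/ε := by positivity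
  calc (⨅ θ : Matrix (Fin 2) (Fin 2) ℝ × (Fin 2 → ℝ) × Matrix (Fin 2) (Fin 2) ℝ × (Fin 2 → ℝ),
        frob (T - psi2 θ))
      ≤ frob (T - psi2 (!![-1, 1+3/ε; 1, (3/ε-2)/2], (fun _ => 0), !![1, -2; 1/(3/ε), 0],
          (fun _ => 0))) := ciInf_le hbdd _
    _ = Real.sqrt (5/(3/ε)^2) := frob_approx (3/ε) hc
    _ ≤ Real.sqrt (ε^2) := by
        apply Real.sqrt_le_sqrt
        rw [div_le_iff₀ (by positivity), div_pow]
        field_simp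
        nlinarith [hε]
    _ = ε := Real.sqrt_sq hε.le
end

section
/- For any design matrix S ∈ ℝ^{n×p}, the ReLU cone C_max(S) is a closed pointed cone in ℝⁿ: it is a closed subset of ℝⁿ, it contains 0, it is closed under multiplication by nonnegative scalars, and it satisfies C_max(S) ∩ (−C_max(S)) = {0}. -/
lemma relu_continuous : Continuous relu := continuous_id.max continuous_const

lemma reluVec_continuous {n : ℕ} : Continuous (fun w : Fin n → ℝ => fun i => relu (w i)) :=
  continuous_pi fun i => relu_continuous.comp (continuous_apply i)

lemma relu_smul {c x : ℝ} (hc : 0 ≤ c) : relu (c * x) = c * relu x := by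
  unfold relu
  rcases le_or_gt x 0 with h | h
  · rw [max_eq_right h, max_eq_right (mul_nonpos_of_nonneg_of_nonpos hc h), mul_zero]
  · rw [max_eq_left h.le, max_eq_left (by positivity : (0:ℝ) ≤ c * x)]

lemma relu_of_nonpos {x : ℝ} (h : x ≤ 0) : relu x = 0 := max_eq_right h

open Filter Topology

lemma reluSet_closed_aux (d : ℕ) : ∀ {n : ℕ} (W : Submodule ℝ (Fin n → ℝ)),
    Module.finrank ℝ W ≤ d →
    IsClosed {v : Fin n → ℝ | ∃ w ∈ W, v = fun i => relu (w i)} := by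
  induction d with
  | zero =>
    intro n W hW
    have hbot : W = ⊥ := Submodule.finrank_eq_zero.mp (Nat.le_zero.mp hW)
    subst hbot
    have : {v : Fin n → ℝ | ∃ w ∈ (⊥ : Submodule ℝ (Fin n → ℝ)), v = fun i => relu (w i)}
        = {fun _ => relu 0} := by
      ext v
      simp [Submodule.mem_bot]
    rw [this]
    exact isClosed_singleton
  | succ d ih =>
    intro n W hW
    apply IsSeqClosed.isClosed
    intro ys y hmem hy
    choose w hwW hws using hmem
    by_cases hb : ∃ M : ℝ, ∀ k, ‖w k‖ ≤ M
    · -- bounded case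
      obtain ⟨M, hM⟩ := hb
      have hcpt : IsCompact (Metric.closedBall (0 : Fin n → ℝ) M ∩ W) :=
        (isCompact_closedBall _ _).inter_right W.closed_of_finiteDimensional
      have hmem' : ∀ k, w k ∈ Metric.closedBall (0 : Fin n → ℝ) M ∩ W := fun k =>
        ⟨by simpa [Metric.mem_closedBall, dist_zero_right] using hM k, hwW k⟩
      obtain ⟨l, hl, φ, hφ, hconv⟩ := hcpt.tendsto_subseq hmem'
      refine ⟨l, hl.2, ?_⟩
      have h1 : Tendsto (fun j => ys (φ j)) atTop (𝓝 y) := hy.comp hφ.tendsto_atTop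
      have h2 : Tendsto (fun j => (fun i => relu (w (φ j) i))) atTop
          (𝓝 (fun i => relu (l i))) := (reluVec_continuous.tendsto l).comp hconv
      exact tendsto_nhds_unique h1 (h2.congr fun j => (hws (φ j)).symm)
    · -- unbounded case
      push_neg at hb
      have hsel : ∀ M : ℕ, ∃ k, M ≤ k ∧ (M : ℝ) + 1 ≤ ‖w k‖ := by
        intro M
        set B : ℝ := (((Finset.range M).sup fun j => ⌈‖w j‖⌉₊ : ℕ) : ℝ) with hB
        obtain ⟨k, hk⟩ := hb (max B ((M : ℝ) + 1))
        refine ⟨k, ?_, le_trans (le_max_right _ _) hk.le⟩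
        by_contra hkM
        push_neg at hkM
        have h2 : (⌈‖w k‖⌉₊ : ℕ) ≤ (Finset.range M).sup fun j => ⌈‖w j‖⌉₊ :=
          Finset.le_sup (f := fun j => ⌈‖w j‖⌉₊) (Finset.mem_range.mpr hkM)
        have h1 : ‖w k‖ ≤ B :=
          le_trans (Nat.le_ceil _) (by rw [hB]; exact_mod_cast h2)
        have := le_max_left B ((M : ℝ) + 1)
        linarith
      choose φ hφ1 hφ2 using hsel
      have hφtop : Tendsto φ atTop atTop := tendsto_atTop_mono hφ1 tendsto_id
      set r : ℕ → ℝ := fun M => ‖w (φ M)‖ with hrdef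
      have hrpos : ∀ M, 0 < r M := fun M => lt_of_lt_of_le (by positivity) (hφ2 M)
      have hrtop : Tendsto r atTop atTop :=
        tendsto_atTop_mono (fun M => le_trans (by linarith) (hφ2 M))
          tendsto_natCast_atTop_atTop
      set u : ℕ → (Fin n → ℝ) := fun M => (r M)⁻¹ • w (φ M) with hudef
      have hnorm1 : ∀ M, ‖u M‖ = 1 := by
        intro M
        have h0 : ‖u M‖ = ‖(r M)⁻¹‖ * ‖w (φ M)‖ := norm_smul _ _
        rw [h0, norm_inv, Real.norm_eq_abs, abs_of_pos (hrpos M)]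
        exact inv_mul_cancel₀ (hrpos M).ne'
      have humem : ∀ M, u M ∈ Metric.closedBall (0 : Fin n → ℝ) 1 ∩ W := by
        intro M
        refine ⟨?_, W.smul_mem _ (hwW _)⟩
        rw [Metric.mem_closedBall, dist_zero_right, hnorm1]
      have hcpt : IsCompact (Metric.closedBall (0 : Fin n → ℝ) 1 ∩ W) :=
        (isCompact_closedBall _ _).inter_right W.closed_of_finiteDimensional
      obtain ⟨l, hl, ψ, hψ, hconv⟩ := hcpt.tendsto_subseq humem
      have hlW : l ∈ W := hl.2
      have hlnorm : ‖l‖ = 1 := by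
        have h1 : Tendsto (fun j => ‖u (ψ j)‖) atTop (𝓝 ‖l‖) :=
          (continuous_norm.tendsto l).comp hconv
        have h2 : Tendsto (fun j => ‖u (ψ j)‖) atTop (𝓝 1) := by
          simp only [hnorm1]; exact tendsto_const_nhds
        exact tendsto_nhds_unique h1 h2
      -- relu of l is 0
      obtain ⟨C, hC⟩ : ∃ C : ℝ, ∀ k, ‖ys k‖ ≤ C := by
        obtain ⟨C, hC⟩ := ((continuous_norm.tendsto y).comp hy).bddAbove_range
        exact ⟨C, fun k => hC ⟨k, rfl⟩⟩
      have hrelul : ∀ M, (fun i => relu (u M i)) = (r M)⁻¹ • ys (φ M) := by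
        intro M
        funext i
        simp only [hudef, Pi.smul_apply, smul_eq_mul]
        rw [relu_smul (inv_nonneg.mpr (hrpos M).le), hws (φ M)]
      have hrelu0 : Tendsto (fun M => (fun i => relu (u M i))) atTop (𝓝 0) := by
        rw [tendsto_zero_iff_norm_tendsto_zero]
        apply squeeze_zero (fun M => norm_nonneg _) (g := fun M => C * (r M)⁻¹)
        · intro M
          rw [hrelul M, norm_smul, norm_inv, norm_norm, mul_comm]
          exact mul_le_mul_of_nonneg_right (hC _) (inv_nonneg.mpr (hrpos M).le)
        · simpa using (tendsto_const_nhds (x := C)).mul hrtop.inv_tendsto_atTop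
      have hlrelu : (fun i => relu (l i)) = 0 := by
        have h1 : Tendsto (fun j => (fun i => relu (u (ψ j) i))) atTop
            (𝓝 (fun i => relu (l i))) := (reluVec_continuous.tendsto l).comp hconv
        have h2 : Tendsto (fun j => (fun i => relu (u (ψ j) i))) atTop (𝓝 0) :=
          hrelu0.comp hψ.tendsto_atTop
        exact tendsto_nhds_unique h1 h2
      have hlnonpos : ∀ i, l i ≤ 0 := by
        intro i
        have := congrFun hlrelu i
        simpa only [relu, Pi.zero_apply, max_eq_right_iff] using this
      have hlne : ∃ i, l i < 0 := by
        by_contra h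
        push_neg at h
        have : l = 0 := funext fun i => le_antisymm (hlnonpos i) (h i)
        rw [this] at hlnorm
        simp at hlnorm
      -- coordinates where l is negative eventually have w negative
      have hwneg : ∀ i, l i < 0 → ∀ᶠ j in atTop, w (φ (ψ j)) i < 0 := by
        intro i hi
        have hci : Tendsto (fun j => u (ψ j) i) atTop (𝓝 (l i)) :=
          ((continuous_apply i).tendsto l).comp hconv
        filter_upwards [hci.eventually_lt_const hi] with j hj
        have hr := hrpos (ψ j)
        simp only [hudef, Pi.smul_apply, smul_eq_mul] at hj
        nlinarith [inv_pos.mpr hr]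
      have hyzero : ∀ i, l i < 0 → y i = 0 := by
        intro i hi
        have h1 : Tendsto (fun j => ys (φ (ψ j)) i) atTop (𝓝 (y i)) :=
          ((continuous_apply i).tendsto y).comp (hy.comp (hφtop.comp hψ.tendsto_atTop))
        have h2 : ∀ᶠ j in atTop, ys (φ (ψ j)) i = 0 := by
          filter_upwards [hwneg i hi] with j hj
          rw [hws (φ (ψ j))]
          exact relu_of_nonpos hj.le
        exact tendsto_nhds_unique (Filter.Tendsto.congr' h2 h1) tendsto_const_nhds
      classical
      -- the projection that kills the negative coordinates of l
      set Q : (Fin n → ℝ) →ₗ[ℝ] (Fin n → ℝ) :=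
        LinearMap.pi (fun i => if l i < 0 then 0 else LinearMap.proj i) with hQdef
      have hQapp : ∀ (v : Fin n → ℝ) (i : Fin n), Q v i = if l i < 0 then 0 else v i := by
        intro v i
        simp only [hQdef, LinearMap.pi_apply]
        by_cases h : l i < 0 <;> simp [h]
      have hQl : Q l = 0 := by
        funext i
        rw [hQapp]
        by_cases h : l i < 0
        · simp [h]
        · push_neg at h
          simp [h, le_antisymm (hlnonpos i) h]
      -- the image has smaller rank
      have hlt : Module.finrank ℝ (W.map Q) ≤ d := by
        have hrn := LinearMap.finrank_range_add_finrank_ker (Q.domRestrict W)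
        have hrange : LinearMap.range (Q.domRestrict W) = W.map Q := by
          ext v
          simp [LinearMap.mem_range, Submodule.mem_map, LinearMap.domRestrict_apply]
        have hker : 0 < Module.finrank ℝ (LinearMap.ker (Q.domRestrict W)) := by
          refine (Module.finrank_pos_iff (R := ℝ) (M := LinearMap.ker (Q.domRestrict W))).mpr ?_
          refine nontrivial_of_ne ⟨⟨l, hlW⟩, ?_⟩ 0 ?_
          · simpa [LinearMap.mem_ker, LinearMap.domRestrict_apply] using hQl
          · intro h
            obtain ⟨i, hi⟩ := hlne
            have h1 : (⟨l, hlW⟩ : W) = 0 := Subtype.ext_iff.mp h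
            have h2 : l = 0 := Subtype.ext_iff.mp h1
            rw [h2] at hi
            simp at hi
        rw [hrange] at hrn
        omega
      have hclosed' := ih (W.map Q) hlt
      -- the relu image of W.map Q is contained in the relu image of W
      have hsubset : {v : Fin n → ℝ | ∃ w' ∈ W.map Q, v = fun i => relu (w' i)} ⊆
          {v : Fin n → ℝ | ∃ w' ∈ W, v = fun i => relu (w' i)} := by
        rintro v ⟨w', ⟨w0, hw0W, rfl⟩, rfl⟩
        obtain ⟨t, ht⟩ := Finite.exists_le (fun i => if l i < 0 then w0 i / (-(l i)) else 0)
        set t' : ℝ := max t 0 with ht'def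
        refine ⟨w0 + t' • l, W.add_mem hw0W (W.smul_mem _ hlW), ?_⟩
        funext i
        rw [hQapp]
        by_cases h : l i < 0
        · simp only [h, if_true, Pi.add_apply, Pi.smul_apply, smul_eq_mul]
          have h1 : w0 i / (-(l i)) ≤ t' := le_trans (by simpa [h] using ht i) (le_max_left _ _)
          rw [div_le_iff₀ (by linarith : (0:ℝ) < -(l i))] at h1
          rw [relu_of_nonpos le_rfl, relu_of_nonpos (show w0 i + t' * l i ≤ 0 by nlinarith)]
        · push_neg at h
          have hl0 : l i = 0 := le_antisymm (hlnonpos i) h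
          simp [h, hl0, not_lt.mpr h]
      -- y is in the relu image of W.map Q
      have hymem : y ∈ {v : Fin n → ℝ | ∃ w' ∈ W.map Q, v = fun i => relu (w' i)} := by
        have hcoord : ∀ i, ∀ᶠ j in atTop,
            relu (Q (w (φ (ψ j))) i) = ys (φ (ψ j)) i := by
          intro i
          by_cases h : l i < 0
          · filter_upwards [hwneg i h] with j hj
            rw [hQapp, if_pos h, hws (φ (ψ j))]
            simp only [relu_of_nonpos hj.le, relu_of_nonpos le_rfl]
          · filter_upwards with j
            rw [hQapp, if_neg h, hws (φ (ψ j))]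
        have heq : ∀ᶠ j in atTop,
            (fun i => relu (Q (w (φ (ψ j))) i)) = ys (φ (ψ j)) := by
          filter_upwards [Filter.eventually_all.mpr hcoord] with j hj
          funext i
          exact hj i
        have h1 : Tendsto (fun j => ys (φ (ψ j))) atTop (𝓝 y) :=
          hy.comp (hφtop.comp hψ.tendsto_atTop)
        have htd : Tendsto (fun j => (fun i => relu (Q (w (φ (ψ j))) i))) atTop (𝓝 y) :=
          Filter.Tendsto.congr' (heq.mono fun j hj => hj.symm) h1
        exact hclosed'.mem_of_tendsto htd (Filter.Eventually.of_forall fun j =>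
          ⟨Q (w (φ (ψ j))), Submodule.mem_map_of_mem (hwW _), rfl⟩)
      exact hsubset hymem

lemma reluSet_closed {n : ℕ} (W : Submodule ℝ (Fin n → ℝ)) :
    IsClosed {v : Fin n → ℝ | ∃ w ∈ W, v = fun i => relu (w i)} :=
  reluSet_closed_aux (Module.finrank ℝ W) W le_rfl

/-- The ReLU cone `C_max(S) = { σ_max(Sa + b𝟙) : a ∈ ℝᵖ, b ∈ ℝ } ⊆ ℝⁿ`. -/
noncomputable def Cmax {n p : ℕ} (S : Matrix (Fin n) (Fin p) ℝ) : Set (Fin n → ℝ) :=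
  {v | ∃ (a : Fin p → ℝ) (b : ℝ), v = fun i => relu (S.mulVec a i + b)}

/-- The ReLU cone `C_max(S)` is a closed pointed cone in `ℝⁿ`: it is closed, contains `0`,
is stable under multiplication by nonnegative scalars, and `C_max(S) ∩ (−C_max(S)) = {0}`. -/
theorem Cmax_closed_pointed_cone {n p : ℕ} (S : Matrix (Fin n) (Fin p) ℝ) :
    IsClosed (Cmax S) ∧
    (0 : Fin n → ℝ) ∈ Cmax S ∧
    (∀ c : ℝ, 0 ≤ c → ∀ x ∈ Cmax S, c • x ∈ Cmax S) ∧
    Cmax S ∩ (-Cmax S) = {0} := by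
  have hzero : (0 : Fin n → ℝ) ∈ Cmax S := by
    refine ⟨0, 0, ?_⟩
    funext i
    simp [Matrix.mulVec_zero, relu]
  refine ⟨?_, hzero, ?_, ?_⟩
  · -- closedness
    set T : ((Fin p → ℝ) × ℝ) →ₗ[ℝ] (Fin n → ℝ) :=
      S.mulVecLin.comp (LinearMap.fst ℝ _ _) +
        (LinearMap.toSpanSingleton ℝ (Fin n → ℝ) (fun _ => 1)).comp (LinearMap.snd ℝ _ _)
      with hT
    have hTapp : ∀ (a : Fin p → ℝ) (b : ℝ) (i : Fin n),
        T (a, b) i = S.mulVec a i + b := by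
      intro a b i
      simp [hT, LinearMap.toSpanSingleton_apply, Matrix.mulVecLin_apply]
    have : Cmax S = {v : Fin n → ℝ | ∃ w ∈ LinearMap.range T, v = fun i => relu (w i)} := by
      ext v
      constructor
      · rintro ⟨a, b, rfl⟩
        exact ⟨T (a, b), ⟨(a, b), rfl⟩, by funext i; rw [hTapp]⟩
      · rintro ⟨w, ⟨⟨a, b⟩, rfl⟩, rfl⟩
        exact ⟨a, b, by funext i; rw [hTapp]⟩
    rw [this]
    exact reluSet_closed _
  · -- cone
    rintro c hc x ⟨a, b, rfl⟩
    refine ⟨c • a, c * b, ?_⟩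
    funext i
    simp only [Pi.smul_apply, smul_eq_mul]
    rw [← relu_smul hc, Matrix.mulVec_smul]
    simp only [Pi.smul_apply, smul_eq_mul]
    ring_nf
  · -- pointed
    ext v
    simp only [Set.mem_inter_iff, Set.mem_neg, Set.mem_singleton_iff]
    constructor
    · rintro ⟨hv, hnv⟩
      obtain ⟨a, b, hab⟩ := hv
      obtain ⟨a', b', hab'⟩ := hnv
      funext i
      have h1 : 0 ≤ v i := by rw [hab]; exact le_max_right _ _
      have h2 : 0 ≤ -v i := by
        have := congrFun hab' i
        simp only [Pi.neg_apply] at this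
        rw [this]
        exact le_max_right _ _
      simp only [Pi.zero_apply]
      linarith
    · rintro rfl
      exact ⟨hzero, by simpa using hzero⟩
end

section
/- A subset C ⊆ ℝⁿ is a ReLU cone, i.e. C = C_max(S) for some p ∈ ℕ and some S ∈ ℝ^{n×p}, if and only if C is the image under the coordinatewise ReLU map σ_max : ℝⁿ → ℝⁿ of some linear subspace L ⊆ ℝⁿ containing the all-ones vector 𝟙. -/
/-- The coordinatewise ReLU map (ReLU projection) `σ_max : ℝⁿ → ℝⁿ`. -/
noncomputable def reluMap {n : ℕ} (v : Fin n → ℝ) : Fin n → ℝ := fun i => relu (v i)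

/-- A subset `C ⊆ ℝⁿ` is a ReLU cone `C_max(S)` for some design matrix `S` if and only if it
is the image, under the coordinatewise ReLU map, of a linear subspace of `ℝⁿ` containing the
all-ones vector `𝟙`. -/
theorem isReLUCone_iff {n : ℕ} (C : Set (Fin n → ℝ)) :
    (∃ (p : ℕ) (S : Matrix (Fin n) (Fin p) ℝ), C = Cmax S) ↔
    (∃ L : Submodule ℝ (Fin n → ℝ), (fun _ => (1 : ℝ)) ∈ L ∧
      C = reluMap '' (L : Set (Fin n → ℝ))) := by
  constructor
  · rintro ⟨p, S, rfl⟩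
    refine ⟨LinearMap.range S.mulVecLin ⊔ Submodule.span ℝ {fun _ => (1 : ℝ)},
      Submodule.mem_sup_right (Submodule.mem_span_singleton_self _), ?_⟩
    ext v
    constructor
    · rintro ⟨a, b, rfl⟩
      refine ⟨S.mulVec a + b • (fun _ => (1 : ℝ)), ?_, ?_⟩
      · exact Submodule.add_mem _ (Submodule.mem_sup_left ⟨a, rfl⟩)
          (Submodule.mem_sup_right (Submodule.smul_mem _ b
            (Submodule.mem_span_singleton_self _)))
      · funext i
        simp [reluMap, relu]
    · rintro ⟨x, hx, rfl⟩
      rw [SetLike.mem_coe, Submodule.mem_sup] at hx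
      obtain ⟨y, ⟨a, rfl⟩, z, hz, rfl⟩ := hx
      rw [Submodule.mem_span_singleton] at hz
      obtain ⟨b, rfl⟩ := hz
      exact ⟨a, b, by funext i; simp [reluMap, relu]⟩
  · rintro ⟨L, h1, rfl⟩
    obtain ⟨q, hq⟩ := Submodule.exists_isCompl L
    let π := L.subtype.comp (L.projectionOnto q hq)
    have hmul : ∀ a, (LinearMap.toMatrix' π).mulVec a = π a := by
      intro a
      rw [← Matrix.toLin'_apply, Matrix.toLin'_toMatrix']
    refine ⟨n, LinearMap.toMatrix' π, ?_⟩
    ext v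
    constructor
    · rintro ⟨x, hx, rfl⟩
      refine ⟨x, 0, ?_⟩
      have hπx : π x = x := by
        simp only [π, LinearMap.comp_apply]
        have := Submodule.linearProjOfIsCompl_apply_left hq ⟨x, hx⟩
        rw [this]
        rfl
      funext i
      simp [reluMap, hmul, hπx]
    · rintro ⟨a, b, rfl⟩
      refine ⟨π a + b • (fun _ => (1 : ℝ)), ?_, ?_⟩
      · exact Submodule.add_mem _ (SetLike.coe_mem _) (Submodule.smul_mem _ b h1)
      · funext i
        simp [reluMap, relu, hmul]
end

section
/- Let x ∈ ℝⁿ have pairwise distinct coordinates. Then for every integer k with 1 ≤ k ≤ n, there exist a k-element subset I ⊆ {1,…,n} and a real number λ such that σ_max(λ𝟙 + x) ∈ ℝⁿ_I, i.e. the i-th coordinate of σ_max(λ𝟙 + x) is strictly positive for i ∈ I and zero for i ∉ I. -/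
/-- Membership in `ℝⁿ_I`: the coordinates in `I` are strictly positive and those outside `I`
vanish. -/
def memRI {n : ℕ} (I : Finset (Fin n)) (x : Fin n → ℝ) : Prop :=
  (∀ i ∈ I, 0 < x i) ∧ ∀ i ∉ I, x i = 0

/-- If `x ∈ ℝⁿ` has pairwise distinct coordinates, then for every `1 ≤ k ≤ n` there are a
`k`-element subset `I ⊆ {1,…,n}` and `λ ∈ ℝ` such that `σ_max(λ𝟙 + x) ∈ ℝⁿ_I`. -/
theorem exists_shift_relu_support {n : ℕ} (x : Fin n → ℝ) (hx : Function.Injective x)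
    (k : ℕ) (hk1 : 1 ≤ k) (hkn : k ≤ n) :
    ∃ I : Finset (Fin n), I.card = k ∧
      ∃ lam : ℝ, memRI I (fun i => relu (lam + x i)) := by
  classical
  have hScard : (Finset.univ.image x).card = n := by
    rw [Finset.card_image_of_injective _ hx, Finset.card_univ, Fintype.card_fin]
  set S := Finset.univ.image x with hS
  have hnk : n - k < n := by omega
  let f := S.orderIsoOfFin hScard
  set t : ℝ := (f ⟨n - k, hnk⟩ : ℝ) with ht
  set I : Finset (Fin n) := Finset.univ.filter (fun i => t ≤ x i) with hI
  have hfilter : S.filter (fun s => t ≤ s) = I.image x := by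
    rw [hS, Finset.filter_image]
  refine ⟨I, ?_, ?_⟩
  · have h1 : (S.filter (fun s => t ≤ s)).card = I.card := by
      rw [hfilter, Finset.card_image_of_injective _ hx]
    have h2 : (S.filter (fun s => t ≤ s)).card
        = (Finset.Ici (⟨n - k, hnk⟩ : Fin n)).card := by
      refine Finset.card_bij'
        (fun s hs => f.symm ⟨s, (Finset.mem_filter.1 hs).1⟩)
        (fun j _ => (f j : ℝ)) ?_ ?_ ?_ ?_
      · intro s hs
        rw [Finset.mem_Ici, OrderIso.le_symm_apply]
        exact Subtype.mk_le_mk.2 (Finset.mem_filter.1 hs).2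
      · intro j hj
        rw [Finset.mem_Ici] at hj
        refine Finset.mem_filter.2 ⟨(f j).2, ?_⟩
        exact Subtype.coe_le_coe.2 (f.le_iff_le.2 hj)
      · intro s hs
        simp
      · intro j hj
        simp
    rw [← h1, h2, Fin.card_Ici]
    simp only [Fin.val_mk]
    omega
  · -- now find lam
    set M : Finset ℝ := insert (t - 1) (Iᶜ.image x) with hM
    have hMne : M.Nonempty := Finset.insert_nonempty _ _
    set m : ℝ := M.max' hMne with hm
    have hmt : m < t := by
      have := Finset.max'_mem M hMne

      rcases Finset.mem_insert.1 this with h | h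
      · show M.max' hMne < t
        rw [h]; linarith
      · rcases Finset.mem_image.1 h with ⟨i, hi, hxi⟩
        have hlt : ¬ t ≤ x i := by
          intro hti
          exact (Finset.mem_compl.1 hi) (Finset.mem_filter.2 ⟨Finset.mem_univ _, hti⟩)
        show M.max' hMne < t
        rw [← hxi]; linarith
    refine ⟨-(m + t) / 2, ?_, ?_⟩
    · intro i hi
      have hti : t ≤ x i := (Finset.mem_filter.1 hi).2
      have : 0 < -(m + t) / 2 + x i := by linarith
      simp only [relu]
      exact lt_max_of_lt_left this
    · intro i hi
      have hxi : x i ∈ M := by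
        rw [hM]
        exact Finset.mem_insert_of_mem
          (Finset.mem_image.2 ⟨i, Finset.mem_compl.2 hi, rfl⟩)
      have hxm : x i ≤ m := Finset.le_max' M _ hxi
      have : -(m + t) / 2 + x i ≤ 0 := by linarith
      simp only [relu]
      exact max_eq_right this
end

section
/- Let n ≥ p + 1. There exists a nonempty open subset U ⊆ (ℝⁿ)ᵖ such that for every (v₁,…,v_p) ∈ U and every integer k with p + 1 ≤ k ≤ n, there exist a k-element subset I ⊆ {1,…,n} and real numbers λ₁,…,λ_p, μ such that the p + 1 vectors σ_max(λ₁𝟙 + v₁), …, σ_max(λ_p𝟙 + v_p), σ_max(μ𝟙 + v₁) all lie in ℝⁿ_I and are linearly independent in ℝⁿ. -/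
lemma aux_snoc_li {p : ℕ} (hp : 0 < p) {V : Type*} [AddCommGroup V] [Module ℝ V]
    (e : V) (w : Fin p → V)
    (hind : LinearIndependent ℝ (Fin.cons e w : Fin (p + 1) → V))
    (L : Fin p → ℝ) (μ : ℝ) (hμ : μ ≠ L ⟨0, hp⟩) :
    LinearIndependent ℝ
      (Fin.snoc (fun j => L j • e + w j) (μ • e + w ⟨0, hp⟩) : Fin (p + 1) → V) := by
  rw [Fintype.linearIndependent_iff] at hind ⊢
  intro g hg
  set z : Fin p := ⟨0, hp⟩ with hz
  have hg' : ∑ m : Fin (p+1),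
      (Fin.cons (∑ j, g j.castSucc * L j + g (Fin.last p) * μ)
        (fun j => g j.castSucc + if j = z then g (Fin.last p) else 0) : Fin (p+1) → ℝ) m
        • (Fin.cons e w : Fin (p+1) → V) m = 0 := by
    rw [Fin.sum_univ_succ]
    simp only [Fin.cons_zero, Fin.cons_succ]
    rw [Fin.sum_univ_castSucc] at hg
    simp only [Fin.snoc_castSucc, Fin.snoc_last] at hg
    rw [← hg]
    simp only [add_smul, smul_add, smul_smul, Finset.sum_add_distrib, Finset.sum_smul,
      ite_smul, zero_smul, Finset.sum_ite_eq', Finset.mem_univ, if_true]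
    abel
  have hcoef := hind _ hg'
  have h1 : ∀ j : Fin p, g j.castSucc + (if j = z then g (Fin.last p) else 0) = 0 := by
    intro j
    simpa using hcoef j.succ
  have h0 : ∑ j, g j.castSucc * L j + g (Fin.last p) * μ = 0 := by
    simpa using hcoef 0
  have hne : ∀ j : Fin p, j ≠ z → g j.castSucc = 0 := by
    intro j hj
    have := h1 j
    simpa [hj] using this
  have hzz : g z.castSucc + g (Fin.last p) = 0 := by simpa using h1 z
  have hsum : ∑ j, g j.castSucc * L j = g z.castSucc * L z :=
    Finset.sum_eq_single z (fun j _ hj => by rw [hne j hj]; ring) (by simp)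
  rw [hsum] at h0
  have hmul : g (Fin.last p) * (μ - L z) = 0 := by
    have : g z.castSucc = -g (Fin.last p) := by linarith
    rw [this] at h0
    ring_nf
    ring_nf at h0
    linarith
  have hlast : g (Fin.last p) = 0 := by
    rcases mul_eq_zero.mp hmul with h | h
    · exact h
    · exact absurd (sub_eq_zero.mp h) hμ
  have hz0 : g z.castSucc = 0 := by linarith
  intro m
  refine Fin.lastCases hlast (fun j => ?_) m
  by_cases hj : j = z
  · subst hj; exact hz0
  · exact hne j hj


/-- For `n ≥ p + 1` there is a nonempty open set of tuples `(v₁,…,v_p)` of vectors in `ℝⁿ`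
such that for every `p + 1 ≤ k ≤ n` there are a `k`-element subset `I ⊆ {1,…,n}` and scalars
`λ₁,…,λ_p, μ` for which the `p + 1` vectors
`σ_max(λ₁𝟙 + v₁), …, σ_max(λ_p𝟙 + v_p), σ_max(μ𝟙 + v₁)` all lie in `ℝⁿ_I` and are linearly
independent. -/
theorem exists_open_linear_independent {n p : ℕ} (hp : 0 < p) (hn : p + 1 ≤ n) :
    ∃ U : Set (Fin p → Fin n → ℝ), IsOpen U ∧ U.Nonempty ∧
      ∀ v ∈ U, ∀ k : ℕ, p + 1 ≤ k → k ≤ n →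
        ∃ I : Finset (Fin n), I.card = k ∧
          ∃ (lam : Fin p → ℝ) (mu : ℝ),
            (∀ j : Fin (p + 1),
              memRI I ((Fin.snoc (fun j' : Fin p => fun i => relu (lam j' + v j' i))
                (fun i => relu (mu + v ⟨0, hp⟩ i)) : Fin (p + 1) → Fin n → ℝ) j)) ∧
            LinearIndependent ℝ
              (Fin.snoc (fun j' : Fin p => fun i => relu (lam j' + v j' i))
                (fun i => relu (mu + v ⟨0, hp⟩ i)) : Fin (p + 1) → Fin n → ℝ) := by
  classical
  set Bmat : (Fin p → Fin n → ℝ) → Matrix (Fin (p+1)) (Fin (p+1)) ℝ :=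
    fun v => Matrix.of (Fin.cons (fun _ => (1:ℝ)) (fun j m => v j (Fin.castLE hn m))) with hBmat
  refine ⟨{v | ∀ j (i i' : Fin n), i < i' → v j i' < v j i} ∩ {v | (Bmat v).det ≠ 0},
    ?_, ?_, ?_⟩
  · -- openness
    apply IsOpen.inter
    · have heq : {v : Fin p → Fin n → ℝ | ∀ j (i i' : Fin n), i < i' → v j i' < v j i}
          = ⋂ (j : Fin p) (i : Fin n) (i' : Fin n), {v | i < i' → v j i' < v j i} := by
        ext v; simp [Set.mem_iInter]
      rw [heq]
      refine isOpen_iInter_of_finite fun j => isOpen_iInter_of_finite fun i =>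
        isOpen_iInter_of_finite fun i' => ?_
      by_cases h : i < i'
      · have : {v : Fin p → Fin n → ℝ | i < i' → v j i' < v j i}
            = {v | v j i' < v j i} := by ext v; simp [h]
        rw [this]
        exact isOpen_lt ((continuous_apply i').comp (continuous_apply j))
          ((continuous_apply i).comp (continuous_apply j))
      · have : {v : Fin p → Fin n → ℝ | i < i' → v j i' < v j i} = Set.univ := by
          ext v; simp [h]
        rw [this]; exact isOpen_univ
    · have hB : Continuous fun v : Fin p → Fin n → ℝ => (Bmat v).det := by
        apply Continuous.matrix_det
        apply continuous_matrix
        intro i m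
        induction i using Fin.cases with
        | zero => simpa [hBmat] using continuous_const
        | succ j =>
          simpa [hBmat, Function.comp_def] using
            (continuous_apply (Fin.castLE hn m)).comp (continuous_apply j)
      have : {v : Fin p → Fin n → ℝ | (Bmat v).det ≠ 0}
          = (fun v : Fin p → Fin n → ℝ => (Bmat v).det) ⁻¹' ({0}ᶜ) := by
        ext v; simp
      rw [this]
      exact (isOpen_compl_singleton).preimage hB
  · -- nonemptiness
    refine ⟨fun j i => -(((i:ℕ):ℝ)+1)^((j:ℕ)+1), ?_, ?_⟩
    · intro j i i' h
      have h1 : ((i:ℕ):ℝ) + 1 < ((i':ℕ):ℝ) + 1 := by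
        have : (i:ℕ) < (i':ℕ) := h
        have := (Nat.cast_lt (α := ℝ)).mpr this
        linarith
      have h2 : (((i:ℕ):ℝ)+1)^((j:ℕ)+1) < (((i':ℕ):ℝ)+1)^((j:ℕ)+1) := by
        gcongr
      simpa using neg_lt_neg h2
    · -- determinant nonzero
      set x : Fin (p+1) → ℝ := fun m => ((m:ℕ):ℝ) + 1 with hx
      have hscale : Bmat (fun j i => -(((i:ℕ):ℝ)+1)^((j:ℕ)+1)) =
          Matrix.of (fun j m => (Fin.cons (1:ℝ) (fun _ => -1) : Fin (p+1) → ℝ) j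
            * (Matrix.vandermonde x).transpose j m) := by
        ext j m
        refine Fin.cases ?_ (fun j' => ?_) j
        · simp [hBmat, Matrix.vandermonde, hx]
        · simp [hBmat, Matrix.vandermonde, hx, Fin.coe_castLE]
      simp only [Set.mem_setOf_eq]
      rw [hscale, Matrix.det_mul_column, Matrix.det_transpose]
      apply mul_ne_zero
      · apply Finset.prod_ne_zero_iff.mpr
        intro j _
        refine Fin.cases ?_ (fun j' => ?_) j <;> norm_num
      · rw [Matrix.det_vandermonde_ne_zero_iff]
        intro a b hab
        have : ((a:ℕ):ℝ) = ((b:ℕ):ℝ) := by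
          simpa [hx] using hab
        exact Fin.ext (Nat.cast_injective this)
  · -- main property
    rintro v ⟨hanti, hdet⟩ k hk1 hk2
    have hkpos : 0 < k := by omega
    have hkp : k - 1 < n := by omega
    set kp : Fin n := ⟨k-1, hkp⟩ with hkpdef
    have hmono : ∀ j (i i' : Fin n), i ≤ i' → v j i' ≤ v j i := by
      intro j i i' h
      rcases eq_or_lt_of_le h with h | h
      · rw [h]
      · exact (hanti j i i' h).le
    -- lambda
    set lam : Fin p → ℝ := fun j => if h : k < n then -(v j ⟨k, h⟩)
      else 1 - v j kp with hlam
    have hpos : ∀ (j : Fin p) (i : Fin n), (i:ℕ) < k → 0 < lam j + v j i := by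
      intro j i hi
      have hik : v j kp ≤ v j i := hmono j i kp (by simp [Fin.le_def, hkpdef]; omega)
      rw [hlam]
      by_cases h : k < n
      · simp only [h, dif_pos]
        have : v j ⟨k, h⟩ < v j kp := hanti j kp ⟨k, h⟩ (by simp [Fin.lt_def, hkpdef]; omega)
        linarith
      · simp only [h, dif_neg, not_false_iff]
        linarith
    have hneg : ∀ (j : Fin p) (i : Fin n), k ≤ (i:ℕ) → lam j + v j i ≤ 0 := by
      intro j i hi
      rw [hlam]
      by_cases h : k < n
      · simp only [h, dif_pos]
        have : v j i ≤ v j ⟨k, h⟩ := hmono j ⟨k, h⟩ i (by simp [Fin.le_def]; omega)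
        linarith
      · exfalso; have := i.isLt; omega
    set z : Fin p := ⟨0, hp⟩ with hzdef
    have hkp_lt : (kp:ℕ) < k := by simp [hkpdef]; omega
    set δ : ℝ := (lam z + v z kp)/2 with hδdef
    have hδ : 0 < δ := by
      have := hpos z kp hkp_lt
      rw [hδdef]; linarith
    set mu : ℝ := lam z - δ with hmudef
    have hposμ : ∀ i : Fin n, (i:ℕ) < k → 0 < mu + v z i := by
      intro i hi
      have hik : v z kp ≤ v z i := hmono z i kp (by simp [Fin.le_def, hkpdef]; omega)
      rw [hmudef, hδdef]
      rw [hδdef] at hδ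
      linarith
    have hnegμ : ∀ i : Fin n, k ≤ (i:ℕ) → mu + v z i ≤ 0 := by
      intro i hi
      have := hneg z i hi
      rw [hmudef]; linarith
    have hμne : mu ≠ lam z := by
      rw [hmudef]; intro h; linarith [hδ, sub_eq_self.mp h]
    -- the set I
    refine ⟨Finset.univ.filter (fun i : Fin n => (i:ℕ) < k), ?_, lam, mu, ?_, ?_⟩
    · have : Finset.univ.filter (fun i : Fin n => (i:ℕ) < k)
          = Finset.map (Fin.castLEEmb hk2) Finset.univ := by
        ext i
        simp only [Finset.mem_filter, Finset.mem_univ, true_and, Finset.mem_map,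
          Fin.castLEEmb_apply]
        constructor
        · intro hi; exact ⟨⟨(i:ℕ), hi⟩, Fin.ext rfl⟩
        · rintro ⟨m, rfl⟩; simpa using m.isLt
      rw [this, Finset.card_map, Finset.card_univ, Fintype.card_fin]
    · -- memRI
      intro j
      refine Fin.lastCases ?_ (fun j' => ?_) j
      · rw [Fin.snoc_last]
        constructor
        · intro i hi
          have hik : (i:ℕ) < k := by simp at hi; exact hi
          have := hposμ i hik
          simp only [relu]
          exact lt_max_of_lt_left this
        · intro i hi
          have hik : k ≤ (i:ℕ) := by
            simp only [Finset.mem_filter, Finset.mem_univ, true_and, not_lt] at hi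
            exact hi
          simp only [relu]
          exact max_eq_right (hnegμ i hik)
      · rw [Fin.snoc_castSucc]
        constructor
        · intro i hi
          have hik : (i:ℕ) < k := by simp at hi; exact hi
          have := hpos j' i hik
          simp only [relu]
          exact lt_max_of_lt_left this
        · intro i hi
          have hik : k ≤ (i:ℕ) := by
            simp only [Finset.mem_filter, Finset.mem_univ, true_and, not_lt] at hi
            exact hi
          simp only [relu]
          exact max_eq_right (hneg j' i hik)
    · -- linear independence
      set T : (Fin n → ℝ) →ₗ[ℝ] (Fin (p+1) → ℝ) := LinearMap.funLeft ℝ ℝ (Fin.castLE hn) with hT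
      apply LinearIndependent.of_comp T
      set e1 : Fin (p+1) → ℝ := fun _ => (1:ℝ) with he1
      set w : Fin p → Fin (p+1) → ℝ := fun j m => v j (Fin.castLE hn m) with hw
      have hcomp : ⇑T ∘ (Fin.snoc (fun j' : Fin p => fun i => relu (lam j' + v j' i))
            (fun i => relu (mu + v ⟨0, hp⟩ i)) : Fin (p + 1) → Fin n → ℝ)
          = (Fin.snoc (fun j => lam j • e1 + w j) (mu • e1 + w z) : Fin (p+1) → Fin (p+1) → ℝ) := by
        funext j
        refine Fin.lastCases ?_ (fun j' => ?_) j
        · funext m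
          have hm : ((Fin.castLE hn m : Fin n) : ℕ) < k := by
            have := m.isLt; simp [Fin.coe_castLE]; omega
          have := hposμ (Fin.castLE hn m) hm
          simp [hT, LinearMap.funLeft, Fin.snoc_last, relu, max_eq_left this.le, he1, hw, hzdef]
          exact this.le
        · funext m
          have hm : ((Fin.castLE hn m : Fin n) : ℕ) < k := by
            have := m.isLt; simp [Fin.coe_castLE]; omega
          have := hpos j' (Fin.castLE hn m) hm
          simp [hT, LinearMap.funLeft, Fin.snoc_castSucc, relu, max_eq_left this.le, he1, hw]
      rw [hcomp]
      have hind : LinearIndependent ℝ (Fin.cons e1 w : Fin (p+1) → Fin (p+1) → ℝ) := by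
        have hunit : IsUnit (Bmat v) :=
          (Matrix.isUnit_iff_isUnit_det _).mpr (isUnit_iff_ne_zero.mpr hdet)
        have := Matrix.linearIndependent_rows_iff_isUnit.mpr hunit
        exact this
      exact aux_snoc_li hp e1 w hind lam mu hμne
end

section
/- For any design matrix S ∈ ℝ^{n×p} and any subset I ⊆ {1,…,n}, the set F_I(S) = C_max(S) ∩ ℝⁿ_I is closed under positive linear combinations: if x, y ∈ F_I(S) and a, b > 0 are real numbers, then ax + by ∈ F_I(S). Consequently, if F_I(S) is nonempty, any maximal linearly independent subset of F_I(S) spans span F_I(S), i.e. dim span F_I(S) equals the dimension of span of the r-fold sumset {x₁ + ⋯ + x_r : xᵢ ∈ F_I(S)} for every r ≥ 1. -/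
/-- The set `ℝⁿ_I`: coordinates in `I` strictly positive, coordinates outside `I` zero. -/
def RI {n : ℕ} (I : Finset (Fin n)) : Set (Fin n → ℝ) :=
  {x | (∀ i ∈ I, 0 < x i) ∧ ∀ i ∉ I, x i = 0}

/-- `F_I(S) = C_max(S) ∩ ℝⁿ_I`. -/
noncomputable def FI {n p : ℕ} (S : Matrix (Fin n) (Fin p) ℝ) (I : Finset (Fin n)) :
    Set (Fin n → ℝ) :=
  Cmax S ∩ RI I

/-- `F_I(S)` is closed under positive linear combinations; consequently, if `F_I(S)` is
nonempty then for every `r ≥ 1` the span of `F_I(S)` has the same dimension as the span of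
the `r`-fold sumset `{x₁ + ⋯ + x_r : xᵢ ∈ F_I(S)}`. -/
theorem FI_pos_combinations {n p : ℕ} (S : Matrix (Fin n) (Fin p) ℝ) (I : Finset (Fin n)) :
    (∀ x ∈ FI S I, ∀ y ∈ FI S I, ∀ a b : ℝ, 0 < a → 0 < b → a • x + b • y ∈ FI S I) ∧
    ((FI S I).Nonempty → ∀ r : ℕ, 1 ≤ r →
      Module.finrank ℝ (Submodule.span ℝ (FI S I)) =
        Module.finrank ℝ (Submodule.span ℝ
          {z : Fin n → ℝ | ∃ x : Fin r → (Fin n → ℝ), (∀ i, x i ∈ FI S I) ∧ z = ∑ i, x i})) := by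
  constructor
  · rintro x ⟨⟨a1, b1, hx⟩, hxI⟩ y ⟨⟨a2, b2, hy⟩, hyI⟩ a b ha hb
    refine ⟨⟨a • a1 + b • a2, a * b1 + b * b2, ?_⟩, ?_, ?_⟩
    · funext i
      have hxi : x i = relu (S.mulVec a1 i + b1) := by rw [hx]
      have hyi : y i = relu (S.mulVec a2 i + b2) := by rw [hy]
      have hmv : S.mulVec (a • a1 + b • a2) i
          = a * S.mulVec a1 i + b * S.mulVec a2 i := by
        rw [Matrix.mulVec_add, Matrix.mulVec_smul, Matrix.mulVec_smul]
        simp [smul_eq_mul]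
      simp only [Pi.add_apply, Pi.smul_apply, smul_eq_mul]
      rw [hmv]
      by_cases hi : i ∈ I
      · have hpos : 0 < x i := hxI.1 i hi
        have hqos : 0 < y i := hyI.1 i hi
        have hu : 0 < S.mulVec a1 i + b1 := by
          by_contra h
          push_neg at h
          rw [hxi] at hpos
          simp [relu, max_eq_right h] at hpos
        have hv : 0 < S.mulVec a2 i + b2 := by
          by_contra h
          push_neg at h
          rw [hyi] at hqos
          simp [relu, max_eq_right h] at hqos
        rw [hxi, hyi, relu, relu, relu, max_eq_left hu.le, max_eq_left hv.le,
          max_eq_left (by nlinarith :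
            (0:ℝ) ≤ a * S.mulVec a1 i + b * S.mulVec a2 i + (a * b1 + b * b2))]
        ring
      · have hx0 : x i = 0 := hxI.2 i hi
        have hy0 : y i = 0 := hyI.2 i hi
        have hu : S.mulVec a1 i + b1 ≤ 0 := by
          by_contra h
          push_neg at h
          rw [hxi, relu, max_eq_left h.le] at hx0
          linarith
        have hv : S.mulVec a2 i + b2 ≤ 0 := by
          by_contra h
          push_neg at h
          rw [hyi, relu, max_eq_left h.le] at hy0
          linarith
        rw [hx0, hy0, relu,
          max_eq_right (by nlinarith :
            a * S.mulVec a1 i + b * S.mulVec a2 i + (a * b1 + b * b2) ≤ 0)]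
        ring
    · intro i hi
      have := hxI.1 i hi
      have := hyI.1 i hi
      simp only [Pi.add_apply, Pi.smul_apply, smul_eq_mul]
      nlinarith
    · intro i hi
      have h1 := hxI.2 i hi
      have h2 := hyI.2 i hi
      simp only [Pi.add_apply, Pi.smul_apply, smul_eq_mul, h1, h2]
      ring
  · rintro _ r hr
    have hspan : Submodule.span ℝ (FI S I) = Submodule.span ℝ ({z : Fin n → ℝ |
          ∃ x : Fin r → (Fin n → ℝ), (∀ i, x i ∈ FI S I) ∧ z = ∑ i, x i}) := by
      apply le_antisymm
      · apply Submodule.span_le.2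
        intro x hx
        have hrpos : (0:ℝ) < (r:ℝ) := by exact_mod_cast hr
        have hz : (∑ _i : Fin r, x) ∈ ({z : Fin n → ℝ |
            ∃ x : Fin r → (Fin n → ℝ), (∀ i, x i ∈ FI S I) ∧ z = ∑ i, x i}) :=
          ⟨fun _ => x, fun _ => hx, rfl⟩
        have hsum : (∑ _i : Fin r, x) = (r:ℝ) • x := by
          simp [Finset.sum_const, ← Nat.cast_smul_eq_nsmul ℝ]
        have : (r:ℝ) • x ∈ Submodule.span ℝ ({z : Fin n → ℝ |
            ∃ x : Fin r → (Fin n → ℝ), (∀ i, x i ∈ FI S I) ∧ z = ∑ i, x i}) := by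
          rw [← hsum]; exact Submodule.subset_span hz
        have := Submodule.smul_mem _ ((r:ℝ)⁻¹) this
        rwa [inv_smul_smul₀ hrpos.ne'] at this
      · apply Submodule.span_le.2
        rintro z ⟨x, hx, rfl⟩
        exact Submodule.sum_mem _ fun i _ => Submodule.subset_span (hx i)
    rw [hspan]
end
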